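/- (Classical substate theorem) Let P, Q be probability distributions on the same finite set with D(P‖Q) < ∞. For every r > 1, there exist distributions P̃ and R such that ‖P − P̃‖₁ ≤ 2/r and Q = (r−1)/(r·2^{rk}) · P̃ + (1 − (r−1)/(r·2^{rk})) · R, where k = D(P‖Q) + 1. -/

import Mathlib

open Matrix BigOperators
open scoped Kronecker ComplexOrder

noncomputable section

section QIT
variable {n : Type*} [Fintype n] [DecidableEq n]

/-- A density matrix: positive semidefinite with unit trace. -/
def IsDensity (ρ : Matrix n n ℂ) : Prop := ρ.PosSemidef ∧ ρ.trace = 1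

/-- Apply a real function to a Hermitian matrix via its spectral decomposition
(junk value `0` on non-Hermitian matrices). -/
def matFun (f : ℝ → ℝ) (A : Matrix n n ℂ) : Matrix n n ℂ :=
  if h : A.IsHermitian then
    (h.eigenvectorUnitary : Matrix n n ℂ) *
      Matrix.diagonal (fun i => (f (h.eigenvalues i) : ℂ)) *
      ((h.eigenvectorUnitary : Matrix n n ℂ))ᴴ
  else 0

/-- von Neumann entropy (in bits). -/
def vnEntropy (A : Matrix n n ℂ) : ℝ :=
  if h : A.IsHermitian then (∑ i, Real.negMulLog (h.eigenvalues i)) / Real.log 2 else 0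

/-- Quantum relative entropy `S(ρ‖σ) = Tr ρ (log ρ − log σ)` (in bits). -/
def relEntropy (ρ σ : Matrix n n ℂ) : ℝ :=
  ((ρ * (matFun Real.log ρ - matFun Real.log σ)).trace).re / Real.log 2

/-- Trace norm of a Hermitian matrix: sum of absolute values of eigenvalues. -/
def traceNorm (A : Matrix n n ℂ) : ℝ :=
  if h : A.IsHermitian then ∑ i, |h.eigenvalues i| else 0

end QIT

section Bipartite
variable {a b : Type*} [Fintype a] [Fintype b] [DecidableEq a] [DecidableEq b]

/-- Partial trace over the second subsystem. -/
def ptraceR (M : Matrix (a × b) (a × b) ℂ) : Matrix a a ℂ :=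
  fun i j => ∑ k, M (i, k) (j, k)

/-- Partial trace over the first subsystem. -/
def ptraceL (M : Matrix (a × b) (a × b) ℂ) : Matrix b b ℂ :=
  fun i j => ∑ k, M (k, i) (k, j)

/-- Quantum mutual information `I(A:B) = S(A) + S(B) − S(AB)` of a bipartite state. -/
def mutualInfo (ρ : Matrix (a × b) (a × b) ℂ) : ℝ :=
  vnEntropy (ptraceR ρ) + vnEntropy (ptraceL ρ) - vnEntropy ρ

end Bipartite

section CQ
variable {X m : Type*} [Fintype X] [Fintype m] [DecidableEq X] [DecidableEq m]

/-- The classical-quantum state `E_{x←p}[|x⟩⟨x| ⊗ ρ_x]`. -/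
def cqState (p : X → ℝ) (ρ : X → Matrix m m ℂ) : Matrix (X × m) (X × m) ℂ :=
  fun xi yj => if xi.1 = yj.1 then (p xi.1 : ℂ) * ρ xi.1 xi.2 yj.2 else 0

end CQ

/-- Probability distributions on a finite type. -/
def FinDist (X : Type*) [Fintype X] : Type _ :=
  {p : X → ℝ // (∀ x, 0 ≤ p x) ∧ ∑ x, p x = 1}

instance (X : Type*) [Fintype X] [Nonempty X] : Nonempty (FinDist X) := by
  refine ⟨⟨fun _ => 1 / Fintype.card X, fun x => by positivity, ?_⟩⟩
  have h : (Fintype.card X : ℝ) ≠ 0 := by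
    exact_mod_cast Fintype.card_ne_zero
  rw [Finset.sum_const, Finset.card_univ, nsmul_eq_mul, mul_one_div_cancel h]

/-- Capacity of a classical-quantum channel. -/
def capacity {X m : Type*} [Fintype X] [DecidableEq X] [Fintype m] [DecidableEq m]
    (E : X → Matrix m m ℂ) : ℝ :=
  ⨆ p : FinDist X, mutualInfo (cqState p.1 E)

/-- Kullback–Leibler divergence (in bits) between finitely supported distributions. -/
def klDiv {Y : Type*} [Fintype Y] (P Q : Y → ℝ) : ℝ :=
  ∑ y, P y * Real.logb 2 (P y / Q y)

/-- ℓ₁ distance between distributions. -/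
def l1Dist {Y : Type*} [Fintype Y] (P Q : Y → ℝ) : ℝ := ∑ y, |P y - Q y|

/-- Binary entropy function (in bits). -/
def binH (p : ℝ) : ℝ := Real.binEntropy p / Real.log 2


/- Call `y` bad when `P y > 2^{rk} Q y`. Each bad point contributes at least `rk · P y`
to `D(P‖Q)`, while the good points contribute at least `-1/(e ln 2) > -1` in total, so Markov's
inequality bounds the bad mass by `1/r`. Conditioning `P` on the good set costs `2/r` in `ℓ₁` and
gives `P̃ ≤ 2^{rk} Q / (1 - 1/r)`, i.e. `(r-1)/(r 2^{rk}) · P̃ ≤ Q`; the rest of `Q` is `R`. -/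

open Finset Real

theorem neg_exp_neg_one_mul_le_mul_log_div {p q : ℝ} (hp : 0 ≤ p) (hq : 0 ≤ q)
    (habs : q = 0 → p = 0) : -(exp (-1) * q) ≤ p * log (p / q) := by
  rcases hp.eq_or_lt with rfl | hp
  · simp only [zero_mul, neg_nonpos]
    positivity
  have hq : 0 < q := hq.lt_of_ne fun h => hp.ne' (habs h.symm)
  set u := log (p / q)
  have hp_eq : p = q * exp u := by rw [exp_log (by positivity)]; field_simp
  -- `u e^u ≥ -1/e` is `1 + (-1 - u) ≤ e^{-1-u}` multiplied by `e^u`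
  have key : -u * exp u ≤ exp (-1) := by
    have h := add_one_le_exp (-1 - u)
    calc -u * exp u ≤ exp (-1 - u) * exp u := by gcongr; linarith
      _ = exp (-1) := by rw [← exp_add]; ring_nf
  rw [hp_eq]
  nlinarith

theorem exp_neg_one_lt_log_two : exp (-1) < log 2 := by
  have he : exp (-1) < 1 / 2 := by
    rw [exp_neg, ← one_div, one_div_lt_one_div (exp_pos 1) two_pos]
    linarith [exp_one_gt_d9]
  linarith [log_two_gt_d9]

theorem mul_sum_filter_lt_klDiv_add_one {Y : Type*} [Fintype Y] {P Q : Y → ℝ}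
    (hP0 : ∀ y, 0 ≤ P y) (hQ0 : ∀ y, 0 ≤ Q y) (hQ1 : ∑ y, Q y = 1)
    (habs : ∀ y, Q y = 0 → P y = 0) (t : ℝ) :
    t * ∑ y ∈ univ.filter (fun y => Q y * 2 ^ t < P y), P y < klDiv P Q + 1 := by
  have hsplit := sum_filter_add_sum_filter_not univ (fun y => Q y * 2 ^ t < P y)
    fun y => P y * logb 2 (P y / Q y)
  rw [← klDiv] at hsplit
  set B := univ.filter (fun y => Q y * 2 ^ t < P y)
  set G := univ.filter (fun y => ¬ Q y * 2 ^ t < P y)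
  set c := exp (-1) / log 2
  have hlog2 : 0 < log 2 := log_pos one_lt_two
  have hc : c < 1 := (div_lt_one hlog2).2 exp_neg_one_lt_log_two
  have hterm (y : Y) : -(c * Q y) ≤ P y * logb 2 (P y / Q y) := by
    have hscale : -(c * Q y) * log 2 = -(exp (-1) * Q y) := by
      simp only [c]
      field_simp
    rw [logb, ← mul_div_assoc, le_div_iff₀ hlog2, hscale]
    exact neg_exp_neg_one_mul_le_mul_log_div (hP0 y) (hQ0 y) (habs y)
  have hbad : t * ∑ y ∈ B, P y ≤ ∑ y ∈ B, P y * logb 2 (P y / Q y) := by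
    rw [mul_sum]
    refine sum_le_sum fun y hy => ?_
    have hy : Q y * 2 ^ t < P y := (mem_filter.1 hy).2
    have hPy : 0 < P y := (mul_nonneg (hQ0 y) (by positivity)).trans_lt hy
    have hQy : 0 < Q y := (hQ0 y).lt_of_ne fun h => hPy.ne' (habs y h.symm)
    have hratio : t ≤ logb 2 (P y / Q y) := by
      rw [le_logb_iff_rpow_le one_lt_two (by positivity), le_div_iff₀ hQy, mul_comm]
      exact hy.le
    rw [mul_comm t]
    exact mul_le_mul_of_nonneg_left hratio (hP0 y)
  have hgood : -c ≤ ∑ y ∈ G, P y * logb 2 (P y / Q y) := by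
    have hQG : ∑ y ∈ G, Q y ≤ 1 :=
      hQ1 ▸ sum_le_sum_of_subset_of_nonneg (filter_subset _ _) fun y _ _ => hQ0 y
    calc -c ≤ -(c * ∑ y ∈ G, Q y) := by
          have : 0 ≤ c := by positivity
          nlinarith
      _ ≤ _ := by
          rw [mul_sum, ← sum_neg_distrib]
          exact sum_le_sum fun y _ => hterm y
  linarith

section Conditioning

variable {Y : Type*}

def condOn (P : Y → ℝ) (S : Finset Y) (y : Y) : ℝ :=
  (S : Set Y).indicator P y / ∑ x ∈ S, P x

variable {P : Y → ℝ} {S : Finset Y}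

theorem condOn_nonneg (hP0 : ∀ y, 0 ≤ P y) (y : Y) : 0 ≤ condOn P S y :=
  div_nonneg (Set.indicator_nonneg (fun x _ => hP0 x) y) (sum_nonneg fun x _ => hP0 x)

variable [Fintype Y]

theorem sum_condOn (hS : ∑ y ∈ S, P y ≠ 0) : ∑ y, condOn P S y = 1 := by
  simp only [condOn]
  rw [← sum_div, sum_indicator_subset P (subset_univ S), div_self hS]

theorem l1Dist_condOn (hP0 : ∀ y, 0 ≤ P y) (hP1 : ∑ y, P y = 1) (hS : 0 < ∑ y ∈ S, P y) :
    l1Dist P (condOn P S) = 2 * (1 - ∑ y ∈ S, P y) := by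
  classical
  set s := ∑ y ∈ S, P y
  have hs1 : s ≤ 1 := hP1 ▸ sum_le_sum_of_subset_of_nonneg (subset_univ S) fun y _ _ => hP0 y
  have hin : ∑ y ∈ S, |P y - condOn P S y| = 1 - s := by
    have (y) (hy : y ∈ S) : |P y - condOn P S y| = P y / s - P y := by
      have : P y ≤ P y / s := le_div_self (hP0 y) hS hs1
      rw [condOn, Set.indicator_of_mem (mem_coe.2 hy), abs_sub_comm, abs_of_nonneg (by linarith)]
    rw [sum_congr rfl this, sum_sub_distrib, ← sum_div, div_self hS.ne']
  have hout : ∑ y ∈ univ \ S, |P y - condOn P S y| = 1 - s := by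
    have (y) (hy : y ∈ univ \ S) : |P y - condOn P S y| = P y := by
      rw [condOn, Set.indicator_of_notMem (mt mem_coe.1 (mem_sdiff.1 hy).2), zero_div, sub_zero,
        abs_of_nonneg (hP0 y)]
    rw [sum_congr rfl this, sum_sdiff_eq_sub (subset_univ S), hP1]
  rw [l1Dist, ← sum_sdiff (subset_univ S), hin, hout]
  ring

theorem div_mul_condOn_le {Q : Y → ℝ} {E a : ℝ}
    (hP0 : ∀ y, 0 ≤ P y) (hQ0 : ∀ y, 0 ≤ Q y) (hE : 0 < E) (ha : 0 < a)
    (hmass : a ≤ ∑ y ∈ univ.filter (fun y => P y ≤ Q y * E), P y) (y : Y) :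
    a / E * condOn P (univ.filter fun y => P y ≤ Q y * E) y ≤ Q y := by
  set s := ∑ y ∈ univ.filter (fun y => P y ≤ Q y * E), P y
  by_cases hy : y ∈ univ.filter fun y => P y ≤ Q y * E
  · have hs : 0 < s := ha.trans_le hmass
    rw [condOn, Set.indicator_of_mem (mem_coe.2 hy)]
    calc a / E * (P y / s) = a / s * (P y / E) := by ring
      _ ≤ 1 * Q y :=
          mul_le_mul ((div_le_one hs).2 hmass) ((div_le_iff₀ hE).2 (mem_filter.1 hy).2)
            (div_nonneg (hP0 y) hE.le) zero_le_one
      _ = Q y := one_mul _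
  · rw [condOn, Set.indicator_of_notMem (mt mem_coe.1 hy), zero_div, mul_zero]
    exact hQ0 y

theorem exists_eq_mul_add_one_sub_mul {Q Pt : Y → ℝ} {ε : ℝ} (hQ1 : ∑ y, Q y = 1)
    (hPt1 : ∑ y, Pt y = 1) (hε : ε < 1) (hle : ∀ y, ε * Pt y ≤ Q y) :
    ∃ R : Y → ℝ, (∀ y, 0 ≤ R y) ∧ (∑ y, R y = 1) ∧ ∀ y, Q y = ε * Pt y + (1 - ε) * R y := by
  have hε' : 1 - ε ≠ 0 := by linarith
  refine ⟨fun y => (Q y - ε * Pt y) / (1 - ε),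
    fun y => div_nonneg (by linarith [hle y]) (by linarith), ?_, fun y => by field_simp; ring⟩
  rw [← sum_div, sum_sub_distrib, ← mul_sum, hQ1, hPt1, mul_one, div_self hε']

end Conditioning

/-- classical substate theorem. -/
theorem stmt11_classical_substate
    {Y : Type} [Fintype Y] (P Q : Y → ℝ)
    (hP0 : ∀ y, 0 ≤ P y) (hP1 : ∑ y, P y = 1)
    (hQ0 : ∀ y, 0 ≤ Q y) (hQ1 : ∑ y, Q y = 1)
    (habs : ∀ y, Q y = 0 → P y = 0)
    (r : ℝ) (hr : 1 < r) :
    ∃ Pt R : Y → ℝ,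
      (∀ y, 0 ≤ Pt y) ∧ (∑ y, Pt y = 1) ∧
      (∀ y, 0 ≤ R y) ∧ (∑ y, R y = 1) ∧
      l1Dist P Pt ≤ 2 / r ∧
      ∀ y, Q y = ((r - 1) / (r * (2 : ℝ) ^ (r * (klDiv P Q + 1)))) * Pt y +
        (1 - (r - 1) / (r * (2 : ℝ) ^ (r * (klDiv P Q + 1)))) * R y := by
  set k := klDiv P Q + 1
  set E : ℝ := 2 ^ (r * k)
  set S := univ.filter fun y => P y ≤ Q y * E
  have hk : 0 < k := by
    simpa using mul_sum_filter_lt_klDiv_add_one hP0 hQ0 hQ1 habs 0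
  have hE : 1 ≤ E := one_le_rpow one_le_two (by positivity)
  have hmass : r * (1 - ∑ y ∈ S, P y) < 1 := by
    have htail := mul_sum_filter_lt_klDiv_add_one hP0 hQ0 hQ1 habs (r * k)
    have hsplit := sum_filter_add_sum_filter_not univ (fun y => P y ≤ Q y * E) P
    simp only [not_le, hP1] at hsplit
    rw [show 1 - ∑ y ∈ S, P y = ∑ y ∈ univ.filter fun y => Q y * E < P y, P y by linarith]
    nlinarith
  have hS : 0 < ∑ y ∈ S, P y := by nlinarith
  have hε : (r - 1) / (r * E) < 1 := by
    rw [div_lt_one (by positivity)]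
    nlinarith
  obtain ⟨R, hR0, hR1, hQ⟩ := exists_eq_mul_add_one_sub_mul hQ1 (sum_condOn hS.ne') hε
    fun y => by
      rw [← div_div]
      exact div_mul_condOn_le hP0 hQ0 (by positivity) (div_pos (by linarith) (by linarith))
        ((div_le_iff₀ (by linarith)).2 (by linarith)) y
  refine ⟨condOn P S, R, condOn_nonneg hP0, sum_condOn hS.ne', hR0, hR1, ?_, hQ⟩
  rw [l1Dist_condOn hP0 hP1 hS, le_div_iff₀ (by positivity)]
  linarith
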